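/- For every rational number n/m ∈ (0,1) (with 0 < n < m), there is a finite set Γ of propositional formulas that is [n/m, 1]-satisfiable but not (n/m, 1]-satisfiable: some probability distribution gives every member of Γ probability at least n/m, but no distribution gives every member probability strictly greater than n/m. -/

import Mathlib

/-- Propositional formulas: atoms, negation, disjunction. -/
inductive Fml : Type
  | atom : ℕ → Fml
  | neg : Fml → Fml
  | or : Fml → Fml → Fml
deriving DecidableEq

namespace Fml

def and (φ ψ : Fml) : Fml := neg (or (neg φ) (neg ψ))

def bot : Fml := and (atom 0) (neg (atom 0))

def imp (φ ψ : Fml) : Fml := or (neg φ) ψ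

def eval (v : ℕ → Bool) : Fml → Bool
  | atom n => v n
  | neg φ => !(eval v φ)
  | or φ ψ => (eval v φ) || (eval v ψ)

end Fml

/-- Two formulas are jointly classically unsatisfiable. -/
def Incompatible (φ ψ : Fml) : Prop :=
  ∀ v : ℕ → Bool, ¬(φ.eval v = true ∧ ψ.eval v = true)

/-- Classical (Set-Set) validity. -/
def ClValid (Γ Δ : Finset Fml) : Prop :=
  ∀ v : ℕ → Bool, (∀ γ ∈ Γ, γ.eval v = true) → ∃ δ ∈ Δ, δ.eval v = true

/-- Classical single-conclusion entailment. -/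
def ClEntails (Γ : Finset Fml) (φ : Fml) : Prop :=
  ∀ v : ℕ → Bool, (∀ γ ∈ Γ, γ.eval v = true) → φ.eval v = true

def ClConsistent (Γ : Finset Fml) : Prop :=
  ∃ v : ℕ → Bool, ∀ γ ∈ Γ, γ.eval v = true

def Tautology (φ : Fml) : Prop := ∀ v : ℕ → Bool, φ.eval v = true

/-- A probability distribution on formulas. -/
structure ProbDist where
  p : Fml → ℝ
  nonneg : ∀ φ, 0 ≤ p φ
  le_one : ∀ φ, p φ ≤ 1
  bot_eq : p Fml.bot = 0
  neg_eq : ∀ φ, p (Fml.neg φ) = 1 - p φ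
  add_eq : ∀ φ ψ, Incompatible φ ψ → p (Fml.or φ ψ) = p φ + p ψ

/-- A probabilistic model: worlds with classical valuations and a finitely
additive probability measure on subsets of worlds. -/
structure PModel where
  W : Type
  nonempty : Nonempty W
  val : W → ℕ → Bool
  μ : Set W → ℝ
  nonneg : ∀ A : Set W, 0 ≤ μ A
  empty_eq : μ (∅ : Set W) = 0
  univ_eq : μ (Set.univ : Set W) = 1
  add_eq : ∀ A B : Set W, Disjoint A B → μ (A ∪ B) = μ A + μ B

/-- Denotation of a formula in a model. -/
def PModel.den (M : PModel) (φ : Fml) : Set M.W := {w | φ.eval (M.val w) = true}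

/-- Induced probability of a formula in a model. -/
def PModel.prob (M : PModel) (φ : Fml) : ℝ := M.μ (M.den φ)

/-- An upset of [0,1]: contains 1, excludes 0, upward closed within [0,1]. -/
def IsUpset (α : Set ℝ) : Prop :=
  α ⊆ Set.Icc 0 1 ∧ (1 : ℝ) ∈ α ∧ (0 : ℝ) ∉ α ∧
    ∀ x ∈ α, ∀ y ∈ Set.Icc (0:ℝ) 1, x ≤ y → y ∈ α

/-- The mirror image of α. -/
def mirror (α : Set ℝ) : Set ℝ := {x ∈ Set.Icc (0:ℝ) 1 | 1 - x ∈ α}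

/-- The dual of α. -/
def dual (α : Set ℝ) : Set ℝ := Set.Icc (0:ℝ) 1 \ mirror α

/-- Conjunction of a finite set of formulas. -/
noncomputable def conj (Γ : Finset Fml) : Fml := Γ.toList.foldr Fml.and (Fml.neg Fml.bot)

/-- Disjunction of a finite set of formulas. -/
noncomputable def disj (Δ : Finset Fml) : Fml := Δ.toList.foldr Fml.or Fml.bot

/-- Disjunction of a list of formulas. -/
def disjList (l : List Fml) : Fml := l.foldr Fml.or Fml.bot

/-- α-preservation validity (over probability distributions). -/
def PresValid (α : Set ℝ) (Γ Δ : Finset Fml) : Prop :=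
  ∀ P : ProbDist, (∀ γ ∈ Γ, P.p γ ∈ α) → ∃ δ ∈ Δ, P.p δ ∈ α

/-- α-preservation validity (over probabilistic models). -/
def PresValidM (α : Set ℝ) (Γ Δ : Finset Fml) : Prop :=
  ∀ M : PModel, (∀ γ ∈ Γ, M.prob γ ∈ α) → ∃ δ ∈ Δ, M.prob δ ∈ α

/-- α-symmetric validity. -/
def SymValid (α : Set ℝ) (Γ Δ : Finset Fml) : Prop :=
  ∀ P : ProbDist, (∀ γ ∈ Γ, P.p γ ∈ α) → ∃ δ ∈ Δ, P.p δ ∉ mirror α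

/-- α-satisfiability of a finite set of formulas. -/
def Satis (α : Set ℝ) (Γ : Finset Fml) : Prop :=
  ∃ P : ProbDist, ∀ γ ∈ Γ, P.p γ ∈ α

/-!
Fix `m` pairwise incompatible, individually consistent formulas `c₀, …, c_{m-1}` indexed by
`ZMod m` (the `k`-th says that atom `k` is the first true atom), and let `Γ` consist of the `m`
cyclic windows `c_k ∨ c_{k+1} ∨ ⋯ ∨ c_{k+n-1}`. The uniform distribution on the cells gives every
window probability exactly `n/m`. Conversely every cell lies in exactly `n` windows, so under any
distribution the window probabilities sum to `n · ∑ₖ P(c_k) ≤ n`, and some window has probability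
at most `n/m`.
-/

open Finset Function

namespace Fml

@[simp] lemma eval_atom (v : ℕ → Bool) (i : ℕ) : (atom i).eval v = v i := rfl

@[simp] lemma eval_neg (v : ℕ → Bool) (φ : Fml) : (neg φ).eval v = !φ.eval v := rfl

@[simp] lemma eval_or (v : ℕ → Bool) (φ ψ : Fml) :
    (or φ ψ).eval v = (φ.eval v || ψ.eval v) := rfl

@[simp] lemma eval_and (v : ℕ → Bool) (φ ψ : Fml) :
    (and φ ψ).eval v = (φ.eval v && ψ.eval v) := by
  simp [and]

@[simp] lemma eval_bot (v : ℕ → Bool) : bot.eval v = false := by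
  simp [bot]

end Fml

lemma eval_disjList (v : ℕ → Bool) (l : List Fml) :
    (disjList l).eval v = true ↔ ∃ φ ∈ l, φ.eval v = true := by
  induction l with
  | nil => simp [disjList]
  | cons φ l ih =>
    change (Fml.or φ (disjList l)).eval v = true ↔ _
    simp [ih]

lemma incompatible_disjList {φ : Fml} {l : List Fml} (h : ∀ ψ ∈ l, Incompatible φ ψ) :
    Incompatible φ (disjList l) := by
  rintro v ⟨hφ, hl⟩
  obtain ⟨ψ, hψ, hψv⟩ := (eval_disjList v l).mp hl
  exact h ψ hψ v ⟨hφ, hψv⟩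

namespace ProbDist

variable (P : ProbDist)

lemma p_disjList {l : List Fml} (h : l.Pairwise Incompatible) :
    P.p (disjList l) = (l.map P.p).sum := by
  induction l with
  | nil => simpa [disjList] using P.bot_eq
  | cons φ l ih =>
    obtain ⟨hφ, hl⟩ := List.pairwise_cons.mp h
    rw [List.map_cons, List.sum_cons, ← ih hl]
    exact P.add_eq φ (disjList l) (incompatible_disjList hφ)

lemma p_disjList_map {ι : Type*} {f : ι → Fml} (hf : Pairwise (Incompatible on f))
    {l : List ι} (hl : l.Nodup) :
    P.p (disjList (l.map f)) = (l.map (P.p ∘ f)).sum := by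
  rw [P.p_disjList (List.pairwise_map.mpr (hl.imp fun hne => hf hne)), List.map_map]

lemma sum_le_one {ι : Type*} [Fintype ι] {f : ι → Fml} (hf : Pairwise (Incompatible on f)) :
    ∑ i, P.p (f i) ≤ 1 := by
  rw [← Finset.sum_map_toList, ← Function.comp_def, ← P.p_disjList_map hf (nodup_toList _)]
  exact P.le_one _

end ProbDist

namespace PModel

variable (M : PModel)

lemma den_neg (φ : Fml) : M.den (.neg φ) = (M.den φ)ᶜ := by
  ext w; simp [den]

lemma den_or (φ ψ : Fml) : M.den (.or φ ψ) = M.den φ ∪ M.den ψ := by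
  ext w; simp [den]

lemma den_bot : M.den .bot = ∅ := by
  ext w; simp [den]

lemma μ_compl (A : Set M.W) : M.μ Aᶜ = 1 - M.μ A := by
  have h := M.add_eq A Aᶜ disjoint_compl_right
  rw [Set.union_compl_self, M.univ_eq] at h
  linarith

noncomputable def toProbDist : ProbDist where
  p := M.prob
  nonneg _ := M.nonneg _
  le_one φ := by
    have := M.μ_compl (M.den φ)
    have := M.nonneg (M.den φ)ᶜ
    unfold prob; linarith
  bot_eq := by rw [prob, den_bot, M.empty_eq]
  neg_eq φ := by rw [prob, den_neg, μ_compl, prob]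
  add_eq φ ψ h := by
    change M.μ (M.den (.or φ ψ)) = M.μ (M.den φ) + M.μ (M.den ψ)
    rw [den_or]
    exact M.add_eq _ _ (Set.disjoint_left.mpr fun w hφ hψ => h (M.val w) ⟨hφ, hψ⟩)

noncomputable def uniform (W : Type) [Finite W] [Nonempty W] (val : W → ℕ → Bool) : PModel where
  W := W
  nonempty := ‹_›
  val := val
  μ A := A.ncard / Nat.card W
  nonneg _ := by positivity
  empty_eq := by simp
  univ_eq := by
    rw [Set.ncard_univ, div_self]
    exact_mod_cast Nat.card_pos.ne'
  add_eq A B h := by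
    rw [Set.ncard_union_eq h]
    push_cast; ring

lemma prob_uniform_of_den_eq_singleton {W : Type} [Finite W] [Nonempty W] {val : W → ℕ → Bool}
    {φ : Fml} {w : W} (h : (uniform W val).den φ = {w}) :
    (uniform W val).prob φ = 1 / Nat.card W := by
  rw [prob, h]
  change (({w} : Set W).ncard : ℝ) / Nat.card W = _
  rw [Set.ncard_singleton, Nat.cast_one]

end PModel

def firstAtom (i : ℕ) : Fml := (Fml.atom i).and (.neg (disjList ((List.range i).map .atom)))

lemma eval_firstAtom (v : ℕ → Bool) (i : ℕ) :
    (firstAtom i).eval v = true ↔ v i = true ∧ ∀ j < i, v j = false := by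
  simp only [firstAtom, Fml.eval_and, Fml.eval_atom, Fml.eval_neg, Bool.and_eq_true,
    Bool.not_eq_true', ← Bool.not_eq_true, eval_disjList]
  simp

lemma incompatible_firstAtom {i j : ℕ} (h : i ≠ j) : Incompatible (firstAtom i) (firstAtom j) := by
  rintro v ⟨hi, hj⟩
  rw [eval_firstAtom] at hi hj
  rcases h.lt_or_gt with h | h
  · simpa [hi.1] using hj.2 i h
  · simpa [hj.1] using hi.2 j h

lemma natCast_fin_injective {n m : ℕ} (hnm : n ≤ m) :
    Injective fun j : Fin n => (j.val : ZMod m) := by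
  intro i j h
  have := congrArg ZMod.val h
  simp only [ZMod.val_natCast_of_lt (i.2.trans_le hnm), ZMod.val_natCast_of_lt (j.2.trans_le hnm)]
    at this
  exact Fin.ext this

section Windows

variable {m : ℕ} [NeZero m]

def cell (k : ZMod m) : Fml := firstAtom k.val

lemma pairwise_incompatible_cell : Pairwise (Incompatible on (cell : ZMod m → Fml)) :=
  fun _ _ h => incompatible_firstAtom ((ZMod.val_injective m).ne h)

def window (n : ℕ) (k : ZMod m) : Fml :=
  disjList ((List.finRange n).map fun j => cell (k + (j.val : ZMod m)))

variable {n : ℕ}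

lemma ProbDist.p_window (P : ProbDist) (hnm : n ≤ m) (k : ZMod m) :
    P.p (window n k) = ∑ j : Fin n, P.p (cell (k + (j.val : ZMod m))) := by
  have hinj : Injective fun j : Fin n => k + (j.val : ZMod m) :=
    (add_right_injective k).comp (natCast_fin_injective hnm)
  rw [window, P.p_disjList_map (pairwise_incompatible_cell.comp_of_injective hinj)
    (List.nodup_finRange n), Fin.sum_univ_def]
  rfl

lemma sum_sum_add {G ι M : Type*} [AddGroup G] [Fintype G] [Fintype ι] [AddCommMonoid M]
    (q : G → M) (a : ι → G) :
    ∑ k, ∑ j, q (k + a j) = Fintype.card ι • ∑ k, q k := by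
  rw [Finset.sum_comm, ← card_univ, ← sum_const]
  exact sum_congr rfl fun j _ => Fintype.sum_equiv (Equiv.addRight (a j)) _ _ fun _ => rfl

lemma ProbDist.exists_p_window_le (P : ProbDist) (hnm : n ≤ m) :
    ∃ k : ZMod m, P.p (window n k) ≤ n / m := by
  have hsum : ∑ k : ZMod m, P.p (window n k) ≤ ∑ _k : ZMod m, (n / m : ℝ) := calc
    ∑ k : ZMod m, P.p (window n k) = n * ∑ k : ZMod m, P.p (cell k) := by
      simp only [P.p_window hnm]
      exact (sum_sum_add (fun k => P.p (cell k)) fun j : Fin n => (j.val : ZMod m)).trans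
        (by rw [Fintype.card_fin, nsmul_eq_mul])
    _ ≤ n * 1 := by gcongr; exact P.sum_le_one pairwise_incompatible_cell
    _ = ∑ _k : ZMod m, (n / m : ℝ) := by
      rw [sum_const, card_univ, ZMod.card, nsmul_eq_mul]
      field_simp [(NeZero.pos m).ne']
  obtain ⟨k, -, hk⟩ := exists_le_of_sum_le univ_nonempty hsum
  exact ⟨k, hk⟩

/-- In world `w` exactly the atom `w.val` is true, so `w` is the only world of `cell w`. -/
noncomputable def cellModel (m : ℕ) [NeZero m] : PModel :=
  PModel.uniform (ZMod m) fun w i => decide (i = w.val)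

lemma cellModel_den_cell (k : ZMod m) : (cellModel m).den (cell k) = {k} := by
  ext w
  simp only [PModel.den, cellModel, PModel.uniform, cell, eval_firstAtom, decide_eq_true_eq,
    decide_eq_false_iff_not]
  constructor
  · rintro ⟨h, -⟩
    exact ZMod.val_injective m h.symm
  · rintro rfl
    exact ⟨rfl, fun j hj => hj.ne⟩

lemma cellModel_p_window (hnm : n ≤ m) (k : ZMod m) :
    (cellModel m).toProbDist.p (window n k) = n / m := by
  rw [ProbDist.p_window _ hnm]
  have hcell (i : ZMod m) : (cellModel m).toProbDist.p (cell i) = 1 / m := by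
    change (cellModel m).prob (cell i) = _
    rw [cellModel, PModel.prob_uniform_of_den_eq_singleton (cellModel_den_cell i),
      Nat.card_zmod]
  simp only [hcell, sum_const, card_univ, Fintype.card_fin, nsmul_eq_mul]
  ring

end Windows

theorem stmt11_general (n m : ℕ) (hnm : n < m) :
    ∃ Γ : Finset Fml,
      Satis (Set.Icc ((n:ℝ)/(m:ℝ)) 1) Γ ∧ ¬ Satis (Set.Ioc ((n:ℝ)/(m:ℝ)) 1) Γ := by
  have : NeZero m := ⟨by omega⟩
  have hle : (n / m : ℝ) ≤ 1 := div_le_one_of_le₀ (by exact_mod_cast hnm.le) (Nat.cast_nonneg m)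
  refine ⟨univ.image (window n : ZMod m → Fml), ?_, ?_⟩
  · refine ⟨(cellModel m).toProbDist, ?_⟩
    rintro _ hγ
    obtain ⟨k, -, rfl⟩ := mem_image.mp hγ
    rw [cellModel_p_window hnm.le]
    exact ⟨le_rfl, hle⟩
  · rintro ⟨P, hP⟩
    obtain ⟨k, hk⟩ := P.exists_p_window_le hnm.le
    exact (hP _ (mem_image_of_mem _ (mem_univ k))).1.not_ge hk

/-- for every rational n/m ∈ (0,1), some finite set is
[n/m,1]-satisfiable but not (n/m,1]-satisfiable. -/
theorem stmt11 (n m : ℕ) (h0 : 0 < n) (hnm : n < m) :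
    ∃ Γ : Finset Fml,
      Satis (Set.Icc ((n:ℝ)/(m:ℝ)) 1) Γ ∧ ¬ Satis (Set.Ioc ((n:ℝ)/(m:ℝ)) 1) Γ :=
  stmt11_general n m hnm
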